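/- Let u be a positive solution of the radial problem (30). Assume that F_r(r,u) \le 0 for all r \in [0,1] and u > 0, where F(r,u) = \int_0^u f(r,t)\,dt, and that for each fixed r_0 \in [0,1) the function u \mapsto f(r_0,u) is either positive for all u > 0, or changes sign exactly once on (0,\infty), being negative for small u > 0 and positive for large u. Then u'(r) < 0 for all r \in (0,1), and f(0,u(0)) > 0. -/

import Mathlib

open Set

/-- `φ_p(t) = t |t|^{p-2}` (real exponent), with `φ_p(0)=0`. -/
noncomputable def phi (p t : ℝ) : ℝ := t * |t| ^ (p - 2)

/-- `φ_p'(t) = (p-1) |t|^{p-2}`. -/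
noncomputable def phi' (p t : ℝ) : ℝ := (p - 1) * |t| ^ (p - 2)

/-- The derivative of a function on `[0,1]` (one-sided at the endpoints). -/
noncomputable def du (u : ℝ → ℝ) : ℝ → ℝ := derivWithin u (Set.Icc 0 1)

/-- A positive (classical) solution of the radial problem (30):
`(φ_p(u'))' + ((n-1)/r) φ_p(u') + f(r,u) = 0` on `(0,1)`, `u'(0) = u(1) = 0`,
with `u ∈ C^1[0,1]`, `φ_p ∘ u' ∈ C^1((0,1])`, and `u > 0` on `[0,1)`. -/
structure RadialSol (p : ℝ) (n : ℕ) (f : ℝ → ℝ → ℝ) (u : ℝ → ℝ) : Prop where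
  reg : ContDiffOn ℝ 1 u (Set.Icc 0 1)
  reg' : ContDiffOn ℝ 1 (fun r => phi p (du u r)) (Set.Ioc 0 1)
  pos : ∀ r ∈ Set.Ico (0:ℝ) 1, 0 < u r
  bc0 : du u 0 = 0
  bc1 : u 1 = 0
  ode : ∀ r ∈ Set.Ioo (0:ℝ) 1,
    deriv (fun s => phi p (du u s)) r + ((n : ℝ) - 1) / r * phi p (du u r) + f r (u r) = 0

/-- A solution of the linearized problem (31) at `u`:
`(φ_p'(u') w')' + ((n-1)/r) φ_p'(u') w' + f_u(r,u) w = 0` on `(0,1)`, `w'(0) = w(1) = 0`. -/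
structure LinSol (p : ℝ) (n : ℕ) (f : ℝ → ℝ → ℝ) (u w : ℝ → ℝ) : Prop where
  reg : ContDiffOn ℝ 1 w (Set.Icc 0 1)
  reg' : ContDiffOn ℝ 1 (fun r => phi' p (du u r) * du w r) (Set.Ioc 0 1)
  ode : ∀ r ∈ Set.Ioo (0:ℝ) 1,
    deriv (fun s => phi' p (du u s) * du w s) r
      + ((n : ℝ) - 1) / r * (phi' p (du u r) * du w r) + deriv (f r) (u r) * w r = 0
  bc0 : du w 0 = 0
  bc1 : w 1 = 0


/-!
Along a solution the energy `E(r) = (p-1)/p |u'|^p + F(r, u)` is nonincreasing, formally because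
`E' = -(n-1)/r |u'|^p + F_r(r, u) ≤ 0`. To avoid a two-variable chain rule for `F`, the bound is
obtained from the majorant `s ↦ (p-1)/p |u'(s)|^p + F(r, u(s))` of `E` to the right of `r`
(`F` decreases in its first argument), which bounds the upper right Dini derivative of `E`.
Hence `E(r) ≥ E(1) ≥ 0`. At a critical point `r` of `u` this reads `F(r, u(r)) ≥ 0`, and the sign
condition on `f(r, ·)` then forces `f(r, u(r)) > 0`; in particular `f(0, u(0)) > 0`.
Finally `w = r^{n-1} φ_p(u')` satisfies `w' = -r^{n-1} f(r, u)`: it is negative near `0`, and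
`w' < 0` at each of its zeros, so it never comes back to `0`, i.e. `u' < 0` on `(0, 1)`.
-/

open Filter Topology MeasureTheory

@[simp] lemma phi_zero (p : ℝ) : phi p 0 = 0 := by simp [phi]

lemma phi_nonneg {p t : ℝ} (h : 0 ≤ t) : 0 ≤ phi p t :=
  mul_nonneg h (Real.rpow_nonneg (abs_nonneg t) _)

lemma phi_neg {p t : ℝ} (h : t < 0) : phi p t < 0 :=
  mul_neg_of_neg_of_pos h (Real.rpow_pos_of_pos (abs_pos.2 h.ne) _)

lemma phi_eq_zero_iff {p t : ℝ} : phi p t = 0 ↔ t = 0 := by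
  refine ⟨fun h => ?_, fun h => h ▸ phi_zero p⟩
  by_contra ht
  exact (mul_ne_zero ht (Real.rpow_pos_of_pos (abs_pos.2 ht) _).ne') h

lemma mul_phi_nonneg (p t : ℝ) : 0 ≤ t * phi p t := by
  rcases le_or_gt 0 t with h | h
  · exact mul_nonneg h (phi_nonneg h)
  · exact mul_nonneg_of_nonpos_of_nonpos h.le (phi_neg h).le

lemma abs_phi {p : ℝ} (hp : 1 < p) (t : ℝ) : |phi p t| = |t| ^ (p - 1) := by
  rcases eq_or_ne t 0 with rfl | h
  · simp [Real.zero_rpow (by linarith : p - 1 ≠ 0)]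
  · rw [phi, abs_mul, abs_of_nonneg (Real.rpow_nonneg (abs_nonneg t) _),
      show p - 1 = 1 + (p - 2) by ring, Real.rpow_add (abs_pos.2 h), Real.rpow_one]

lemma continuous_phi {p : ℝ} (hp : 1 < p) : Continuous (phi p) := by
  refine continuous_iff_continuousAt.2 fun t => ?_
  rcases eq_or_ne t 0 with rfl | h
  · -- `|t| ^ (p - 2)` may blow up at `0`, but `|φ_p t| = |t| ^ (p - 1)` does not
    have h0 : Tendsto (fun x : ℝ => |x| ^ (p - 1)) (𝓝 0) (𝓝 0) := by
      simpa [Real.zero_rpow (by linarith : p - 1 ≠ 0)] using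
        ((continuous_abs.rpow_const fun _ => Or.inr (by linarith) :
          Continuous fun x : ℝ => |x| ^ (p - 1)).tendsto 0)
    simpa [ContinuousAt] using
      squeeze_zero_norm (fun x => (Real.norm_eq_abs _).trans_le (abs_phi hp x).le) h0
  · exact continuousAt_id.mul
      ((Real.continuousAt_rpow_const _ _ (Or.inl (abs_ne_zero.2 h))).comp
        continuous_abs.continuousAt)

lemma phi_conj_phi {p : ℝ} (hp : 1 < p) (t : ℝ) : phi (p / (p - 1)) (phi p t) = t := by
  rcases eq_or_ne t 0 with rfl | h
  · simp
  · have hp1 : p - 1 ≠ 0 := by linarith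
    rw [phi, abs_phi hp, ← Real.rpow_mul (abs_nonneg t),
      show (p - 1) * (p / (p - 1) - 2) = 2 - p by field_simp; ring,
      phi, mul_assoc, ← Real.rpow_add (abs_pos.2 h), show p - 2 + (2 - p) = 0 by ring,
      Real.rpow_zero, mul_one]

lemma hasDerivAt_abs_rpow_eq_phi {q : ℝ} (hq : 1 < q) (t : ℝ) :
    HasDerivAt (fun x : ℝ => |x| ^ q) (q * phi q t) t := by
  convert hasDerivAt_abs_rpow t hq using 1
  rw [phi]; ring

def PosOrChangesSignOnce (g : ℝ → ℝ) : Prop :=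
  (∀ v > (0:ℝ), 0 < g v) ∨ ∃ γ > (0:ℝ), (∀ v ∈ Ioo (0:ℝ) γ, g v < 0) ∧ (∀ v > γ, 0 < g v)

lemma PosOrChangesSignOnce.pos_of_integral_nonneg {g : ℝ → ℝ} (hsign : PosOrChangesSignOnce g)
    {y : ℝ} (hy : 0 < y) (hg : ContinuousOn g (Icc 0 y)) (hint : 0 ≤ ∫ t in (0:ℝ)..y, g t) :
    0 < g y := by
  rcases hsign with hpos | ⟨γ, -, hneg, hpos⟩
  · exact hpos y hy
  by_contra! hgy
  have hyγ : y ≤ γ := not_lt.1 fun h => (hpos y h).not_ge hgy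
  have : 0 < ∫ t in (0:ℝ)..y, -g t :=
    intervalIntegral.intervalIntegral_pos_of_pos_on
      (by rw [← uIcc_of_le hy.le] at hg; exact hg.neg.intervalIntegrable)
      (fun t ht => neg_pos.2 (hneg t ⟨ht.1, ht.2.trans_le hyγ⟩)) hy
  rw [intervalIntegral.integral_neg] at this
  linarith

lemma ContinuousOn.exists_continuous_uncurry_eqOn {f : ℝ → ℝ → ℝ} {a b : ℝ} (hab : a ≤ b)
    (hf : ContinuousOn (fun z : ℝ × ℝ => f z.1 z.2) (Icc a b ×ˢ Ici 0)) :
    ∃ g : ℝ → ℝ → ℝ, Continuous (fun z : ℝ × ℝ => g z.1 z.2) ∧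
      ∀ r ∈ Icc a b, ∀ t, 0 ≤ t → g r t = f r t := by
  refine ⟨fun r t => f (max a (min r b)) (max t 0), ?_, fun r hr t ht => ?_⟩
  · exact hf.comp_continuous (f := fun z : ℝ × ℝ => (max a (min z.1 b), max z.2 0))
      (by fun_prop) fun z =>
        ⟨⟨le_max_left _ _, max_le hab (min_le_right _ _)⟩, mem_Ici.2 (le_max_right _ _)⟩
  · simp [min_eq_left hr.2, max_eq_right hr.1, ht]

lemma differentiableAt_intervalIntegral_of_contDiffOn {f : ℝ → ℝ → ℝ} {a b r y : ℝ}
    (hf : ContDiffOn ℝ 1 (fun z : ℝ × ℝ => f z.1 z.2) (Icc a b ×ˢ Ici 0))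
    (hr : r ∈ Ioo a b) (hy : 0 ≤ y) :
    DifferentiableAt ℝ (fun s => ∫ t in (0:ℝ)..y, f s t) r := by
  set S := Icc a b ×ˢ Ici (0:ℝ)
  set D := fderivWithin ℝ (fun z : ℝ × ℝ => f z.1 z.2) S
  have hD : ContinuousOn D S := hf.continuousOn_fderivWithin
    ((uniqueDiffOn_Icc (hr.1.trans hr.2)).prod (uniqueDiffOn_Ici 0)) le_rfl
  have hslice : ∀ x ∈ Icc a b, MapsTo (fun t : ℝ => (x, t)) (Ici 0) S := fun x hx t ht => ⟨hx, ht⟩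
  have hf_slice : ∀ x ∈ Icc a b, ContinuousOn (f x) (Ici 0) := fun x hx =>
    hf.continuousOn.comp (continuousOn_const.prodMk continuousOn_id) (hslice x hx)
  have hIoc : uIoc 0 y ⊆ Ici 0 := by
    rw [uIoc_of_le hy]; exact Ioc_subset_Ioi_self.trans Ioi_subset_Ici_self
  have hpartial : ∀ x ∈ Ioo a b, ∀ t, 0 ≤ t → HasDerivAt (f · t) (D (x, t) (1, 0)) x := by
    intro x hx t ht
    have hfx : HasFDerivWithinAt _ (D (x, t)) S (x, t) :=
      (hf.differentiableOn one_ne_zero _ (hslice x (Ioo_subset_Icc_self hx) ht)).hasFDerivWithinAt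
    exact (hfx.comp_hasDerivWithinAt x ((hasDerivWithinAt_id x _).prodMk
      (hasDerivWithinAt_const x _ t)) fun s hs => hslice s hs ht).hasDerivAt
      (Icc_mem_nhds hx.1 hx.2)
  obtain ⟨M, hM⟩ := (isCompact_Icc.prod isCompact_Icc).exists_bound_of_continuousOn
    (hD.mono (prod_mono subset_rfl (Icc_subset_Ici_self : Icc 0 y ⊆ Ici 0)))
  refine (intervalIntegral.hasDerivAt_integral_of_dominated_loc_of_deriv_le
    (F' := fun x t => D (x, t) (1, 0)) (bound := fun _ => M) (Ioo_mem_nhds hr.1 hr.2)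
    ?_ ?_ ?_ ?_ intervalIntegrable_const ?_).2.differentiableAt
  · filter_upwards [Ioo_mem_nhds hr.1 hr.2] with x hx
    exact ((hf_slice x (Ioo_subset_Icc_self hx)).mono hIoc).aestronglyMeasurable
      measurableSet_uIoc
  · refine ((hf_slice r (Ioo_subset_Icc_self hr)).mono ?_).intervalIntegrable
    rw [uIcc_of_le hy]; exact Icc_subset_Ici_self
  · exact (((hD.comp (continuousOn_const.prodMk continuousOn_id)
      (hslice r (Ioo_subset_Icc_self hr))).mono hIoc).clm_apply
      continuousOn_const).aestronglyMeasurable measurableSet_uIoc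
  · refine ae_of_all _ fun t ht x hx => ?_
    rw [uIoc_of_le hy] at ht
    calc ‖D (x, t) (1, 0)‖ ≤ ‖D (x, t)‖ * ‖((1:ℝ), (0:ℝ))‖ := (D (x, t)).le_opNorm _
      _ ≤ M := by
        simpa using hM (x, t) ⟨Ioo_subset_Icc_self hx, ht.1.le, ht.2⟩
  · refine ae_of_all _ fun t ht x hx => hpartial x hx t ?_
    rw [uIoc_of_le hy] at ht
    exact ht.1.le

theorem le_of_forall_hasDerivAt_majorant {E : ℝ → ℝ} {a b : ℝ} (hab : a ≤ b)
    (hE : ContinuousOn E (Icc a b))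
    (hmaj : ∀ x ∈ Ioo a b, ∃ H : ℝ → ℝ, ∃ H' ≤ 0,
      HasDerivAt H H' x ∧ H x = E x ∧ ∀ᶠ z in 𝓝[>] x, E z ≤ H z) :
    E b ≤ E a := by
  rcases hab.eq_or_lt with rfl | hab
  · exact le_rfl
  have hinner : ∀ c ∈ Ioo a b, E b ≤ E c := by
    intro c hc
    refine image_le_of_liminf_slope_right_le_deriv_boundary
      (hE.mono (Icc_subset_Icc hc.1.le le_rfl)) (B := fun _ => E c) (B' := fun _ => 0) le_rfl
      continuousOn_const (fun _ _ => hasDerivWithinAt_const _ _ _) (fun x hx ε hε => ?_)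
      (right_mem_Icc.2 hc.2.le)
    obtain ⟨H, H', hH', hH, hHx, hEH⟩ := hmaj x ⟨hc.1.trans_le hx.1, hx.2⟩
    have hslope : ∀ᶠ z in 𝓝[>] x, slope H x z < ε :=
      ((hasDerivAt_iff_tendsto_slope.1 hH).mono_left (nhdsGT_le_nhdsNE x)).eventually_lt_const
        (hH'.trans_lt hε)
    refine ((hslope.and (hEH.and self_mem_nhdsWithin)).mono
      fun z ⟨hz, hEz, hxz⟩ => ?_).frequently
    refine lt_of_le_of_lt ?_ hz
    rw [slope_def_field, slope_def_field, hHx]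
    exact div_le_div_of_nonneg_right (by linarith) (sub_pos.2 hxz).le
  refine ge_of_tendsto
    ((hE a (left_mem_Icc.2 hab.le)).mono_of_mem_nhdsWithin (Icc_mem_nhdsGT hab)) ?_
  filter_upwards [Ioo_mem_nhdsGT hab] with c hc using hinner c hc

theorem neg_of_hasDerivAt_neg_of_eq_zero {w w' : ℝ → ℝ} {a b : ℝ}
    (hw : ∀ x ∈ Ioo a b, HasDerivAt w (w' x) x) (hzero : ∀ x ∈ Ioo a b, w x = 0 → w' x < 0)
    (hnear : ∀ᶠ x in 𝓝[>] a, w x < 0) {x : ℝ} (hx : x ∈ Ioo a b) : w x < 0 := by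
  obtain ⟨c, hcw, hc⟩ := (hnear.and (Ioo_mem_nhdsGT hx.1)).exists
  have hle : ∀ z ∈ Ioo c b, w z ≤ 0 := by
    intro z hz
    have hsub : Icc c z ⊆ Ioo a b := Icc_subset_Ioo hc.1 hz.2
    refine image_le_of_deriv_right_lt_deriv_boundary' (f' := w') (B' := fun _ => 0)
      (fun y hy => (hw y (hsub hy)).continuousAt.continuousWithinAt)
      (fun y hy => (hw y (hsub (Ico_subset_Icc_self hy))).hasDerivWithinAt) hcw.le
      continuousOn_const (fun _ _ => hasDerivWithinAt_const _ _ _)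
      (fun y hy hy0 => hzero y (hsub (Ico_subset_Icc_self hy)) hy0) (right_mem_Icc.2 hz.1.le)
  refine (hle x ⟨hc.2, hx.2⟩).lt_of_ne fun hx0 => (hzero x hx hx0).ne ?_
  have hmax : IsLocalMax w x := Filter.mem_of_superset (Ioo_mem_nhds hc.2 hx.2) fun z hz => by
    simpa [hx0] using hle z hz
  exact hmax.hasDerivAt_eq_zero (hw x hx)

noncomputable def primitive (f : ℝ → ℝ → ℝ) (r y : ℝ) : ℝ := ∫ t in (0:ℝ)..y, f r t

lemma primitive_congr {f g : ℝ → ℝ → ℝ} {r y : ℝ} (hy : 0 ≤ y)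
    (hfg : ∀ t, 0 ≤ t → g r t = f r t) : primitive f r y = ∫ t in (0:ℝ)..y, g r t :=
  intervalIntegral.integral_congr fun t ht => (hfg t (uIcc_of_le hy ▸ ht).1).symm

section Primitive

variable {f : ℝ → ℝ → ℝ}

lemma continuousOn_primitive_comp
    (hf : ContinuousOn (fun z : ℝ × ℝ => f z.1 z.2) (Icc 0 1 ×ˢ Ici 0)) {u : ℝ → ℝ}
    (hu : ContinuousOn u (Icc 0 1)) (hu0 : ∀ r ∈ Icc (0:ℝ) 1, 0 ≤ u r) :
    ContinuousOn (fun r => primitive f r (u r)) (Icc 0 1) := by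
  obtain ⟨g, hg, hgf⟩ := hf.exists_continuous_uncurry_eqOn zero_le_one
  exact ((intervalIntegral.continuous_parametric_primitive_of_continuous (a₀ := 0)
    (μ := volume) hg).comp_continuousOn (continuousOn_id.prodMk hu)).congr fun r hr =>
      primitive_congr (hu0 r hr) (hgf r hr)

lemma antitoneOn_primitive
    (hf : ContDiffOn ℝ 1 (fun z : ℝ × ℝ => f z.1 z.2) (Icc 0 1 ×ˢ Ici 0))
    (hFr : ∀ r ∈ Icc (0:ℝ) 1, ∀ v > (0:ℝ), deriv (fun s => primitive f s v) r ≤ 0)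
    {y : ℝ} (hy : 0 ≤ y) : AntitoneOn (fun r => primitive f r y) (Icc 0 1) := by
  rcases hy.eq_or_lt with rfl | hy
  · simp [primitive, AntitoneOn]
  refine antitoneOn_of_deriv_nonpos (convex_Icc 0 1)
    (continuousOn_primitive_comp hf.continuousOn continuousOn_const fun _ _ => hy.le)
    (fun r hr => ?_) fun r hr => hFr r (interior_subset hr) y hy
  rw [interior_Icc] at hr
  exact (differentiableAt_intervalIntegral_of_contDiffOn hf hr hy.le).differentiableWithinAt

end Primitive

/-- `(p - 1)/p |u'|^p + F(r, u)`, with `|u'|^p` written as `|φ_p(u')|^{p/(p-1)}` because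
`φ_p(u')`, not `u'`, is what the equation makes differentiable. -/
noncomputable def energy (p : ℝ) (f : ℝ → ℝ → ℝ) (u : ℝ → ℝ) (r : ℝ) : ℝ :=
  (p - 1) / p * |phi p (du u r)| ^ (p / (p - 1)) + primitive f r (u r)

namespace RadialSol

variable {p : ℝ} {n : ℕ} {f : ℝ → ℝ → ℝ} {u : ℝ → ℝ}

lemma nonneg (hu : RadialSol p n f u) {r : ℝ} (hr : r ∈ Icc (0:ℝ) 1) : 0 ≤ u r := by
  rcases hr.2.eq_or_lt with rfl | h
  · exact hu.bc1.ge
  · exact (hu.pos r ⟨hr.1, h⟩).le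

lemma continuousOn_du (hu : RadialSol p n f u) : ContinuousOn (du u) (Icc 0 1) :=
  hu.reg.continuousOn_derivWithin (uniqueDiffOn_Icc zero_lt_one) le_rfl

lemma hasDerivAt (hu : RadialSol p n f u) {r : ℝ} (hr : r ∈ Ioo (0:ℝ) 1) :
    HasDerivAt u (du u r) r :=
  ((hu.reg.differentiableOn one_ne_zero) r (Ioo_subset_Icc_self hr)).hasDerivWithinAt.hasDerivAt
    (Icc_mem_nhds hr.1 hr.2)

lemma hasDerivAt_phi (hu : RadialSol p n f u) {r : ℝ} (hr : r ∈ Ioo (0:ℝ) 1) :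
    HasDerivAt (fun s => phi p (du u s))
      (-(((n : ℝ) - 1) / r * phi p (du u r) + f r (u r))) r := by
  have hdiff := (hu.reg'.differentiableOn one_ne_zero r ⟨hr.1, hr.2.le⟩).differentiableAt
    (Ioc_mem_nhds hr.1 hr.2)
  refine hdiff.hasDerivAt.congr_deriv ?_
  linarith [hu.ode r hr]

lemma hasDerivAt_pow_mul_phi (hu : RadialSol p n f u) (hn : 1 ≤ n) {r : ℝ}
    (hr : r ∈ Ioo (0:ℝ) 1) :
    HasDerivAt (fun s => s ^ (n - 1) * phi p (du u s)) (-(r ^ (n - 1) * f r (u r))) r := by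
  refine ((hasDerivAt_pow (n - 1) r).mul (hu.hasDerivAt_phi hr)).congr_deriv ?_
  obtain ⟨m, rfl⟩ : ∃ m, n = m + 1 := ⟨n - 1, by omega⟩
  rcases m with _ | m
  · simp
  · have hr0 : r ≠ 0 := hr.1.ne'
    simp only [Nat.add_sub_cancel, Nat.cast_add, Nat.cast_one, add_sub_cancel_right, pow_succ]
    field_simp
    ring

lemma continuousOn_energy (hp : 1 < p)
    (hf : ContinuousOn (fun z : ℝ × ℝ => f z.1 z.2) (Icc 0 1 ×ˢ Ici 0))
    (hu : RadialSol p n f u) : ContinuousOn (energy p f u) (Icc 0 1) := by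
  have hq : 0 ≤ p / (p - 1) := div_nonneg (by linarith) (by linarith)
  exact (continuousOn_const.mul (((continuous_abs.rpow_const fun _ => Or.inr hq).comp
    (continuous_phi hp)).comp_continuousOn hu.continuousOn_du)).add
    (continuousOn_primitive_comp hf hu.reg.continuousOn fun _ => hu.nonneg)

lemma energy_one_nonneg (hp : 1 < p) (hu : RadialSol p n f u) : 0 ≤ energy p f u 1 := by
  rw [energy, hu.bc1, primitive, intervalIntegral.integral_same, add_zero]
  exact mul_nonneg (div_nonneg (by linarith) (by linarith)) (Real.rpow_nonneg (abs_nonneg _) _)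

lemma energy_one_le (hp : 1 < p) (hn : 1 ≤ n)
    (hf : ContDiffOn ℝ 1 (fun z : ℝ × ℝ => f z.1 z.2) (Icc 0 1 ×ˢ Ici 0))
    (hFr : ∀ r ∈ Icc (0:ℝ) 1, ∀ v > (0:ℝ), deriv (fun s => primitive f s v) r ≤ 0)
    (hu : RadialSol p n f u) {r : ℝ} (hr : r ∈ Ico (0:ℝ) 1) :
    energy p f u 1 ≤ energy p f u r := by
  set q := p / (p - 1)
  have hq : 1 < q := by rw [lt_div_iff₀ (by linarith)]; linarith
  obtain ⟨g, hg, hgf⟩ := hf.continuousOn.exists_continuous_uncurry_eqOn zero_le_one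
  refine le_of_forall_hasDerivAt_majorant hr.2.le
    ((hu.continuousOn_energy hp hf.continuousOn).mono (Icc_subset_Icc hr.1 le_rfl))
    fun x hx => ?_
  have hx' : x ∈ Ioo (0:ℝ) 1 := ⟨hr.1.trans_lt hx.1, hx.2⟩
  have hxI : x ∈ Icc (0:ℝ) 1 := Ioo_subset_Icc_self hx'
  -- freeze the first argument of `F` at `x`; `F` only decreases in it
  let H : ℝ → ℝ := fun z => (p - 1) / p * |phi p (du u z)| ^ q + ∫ t in (0:ℝ)..u z, g x t
  have hH := (((hasDerivAt_abs_rpow_eq_phi hq _).comp x (hu.hasDerivAt_phi hx')).const_mul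
    ((p - 1) / p)).add (((hg.comp (Continuous.prodMk_right x)).integral_hasStrictDerivAt 0
      (u x)).hasDerivAt.comp x (hu.hasDerivAt hx'))
  refine ⟨H, _, ?_, hH, ?_, ?_⟩
  · have hp1 : p - 1 ≠ 0 := by linarith
    rw [Function.comp_apply, show phi q (phi p (du u x)) = du u x from phi_conj_phi hp _,
      hgf x hxI _ (hu.nonneg hxI)]
    calc (p - 1) / p * (q * du u x * -(((n : ℝ) - 1) / x * phi p (du u x) + f x (u x)))
          + f x (u x) * du u x
        = -(((n : ℝ) - 1) / x * (du u x * phi p (du u x))) := by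
          simp only [q]; field_simp; ring
      _ ≤ 0 := neg_nonpos.2 (mul_nonneg (div_nonneg (by simp [hn]) hx'.1.le)
          (mul_phi_nonneg p _))
  · exact congrArg _ (primitive_congr (hu.nonneg hxI) (hgf x hxI)).symm
  · filter_upwards [Ioo_mem_nhdsGT hx.2] with z hz
    have hzI : z ∈ Icc (0:ℝ) 1 := ⟨hx'.1.le.trans hz.1.le, hz.2.le⟩
    refine add_le_add le_rfl ?_
    rw [← primitive_congr (hu.nonneg hzI) (hgf x hxI)]
    exact antitoneOn_primitive hf hFr (hu.nonneg hzI) hxI hzI hz.1.le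

lemma pos_of_du_eq_zero (hp : 1 < p) (hn : 1 ≤ n)
    (hf : ContDiffOn ℝ 1 (fun z : ℝ × ℝ => f z.1 z.2) (Icc 0 1 ×ˢ Ici 0))
    (hFr : ∀ r ∈ Icc (0:ℝ) 1, ∀ v > (0:ℝ), deriv (fun s => primitive f s v) r ≤ 0)
    (hsign : ∀ r₀ ∈ Ico (0:ℝ) 1, PosOrChangesSignOnce (f r₀))
    (hu : RadialSol p n f u) {r : ℝ} (hr : r ∈ Ico (0:ℝ) 1) (hdu : du u r = 0) :
    0 < f r (u r) := by
  have hrI : r ∈ Icc (0:ℝ) 1 := Ico_subset_Icc_self hr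
  have hE : energy p f u r = primitive f r (u r) := by
    rw [energy, hdu, phi_zero, abs_zero,
      Real.zero_rpow (div_pos (by linarith) (by linarith)).ne', mul_zero, zero_add]
  refine (hsign r hr).pos_of_integral_nonneg (hu.pos r hr)
    (hf.continuousOn.comp (continuousOn_const.prodMk continuousOn_id) fun t ht =>
      ⟨hrI, ht.1⟩) ?_
  have := (hu.energy_one_nonneg hp).trans (hu.energy_one_le hp hn hf hFr hr)
  rwa [hE] at this

lemma eventually_pow_mul_phi_neg (hp : 1 < p) (hn : 1 ≤ n)
    (hf : ContinuousOn (fun z : ℝ × ℝ => f z.1 z.2) (Icc 0 1 ×ˢ Ici 0))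
    (hu : RadialSol p n f u) (hf0 : 0 < f 0 (u 0)) :
    ∀ᶠ r in 𝓝[>] 0, r ^ (n - 1) * phi p (du u r) < 0 := by
  have hfu : ContinuousWithinAt (fun s => f s (u s)) (Ici 0) 0 :=
    ((hf.comp (continuousOn_id.prodMk hu.reg.continuousOn) fun s hs => ⟨hs, hu.nonneg hs⟩) 0
      (left_mem_Icc.2 zero_le_one)).mono_of_mem_nhdsWithin (Icc_mem_nhdsGE zero_lt_one)
  obtain ⟨δ, hδ, hsub⟩ := mem_nhdsGE_iff_exists_Ico_subset.1
    ((hfu.eventually (lt_mem_nhds hf0)).and (Ico_mem_nhdsGE zero_lt_one))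
  filter_upwards [Ioo_mem_nhdsGT hδ] with r hr
  have hpos : ∀ s ∈ Icc 0 r, s < 1 := fun s hs => (hsub ⟨hs.1, hs.2.trans_lt hr.2⟩).2.2
  have hanti : StrictAntiOn (fun s => s ^ (n - 1) * phi p (du u s)) (Icc 0 r) := by
    refine strictAntiOn_of_deriv_neg (convex_Icc 0 r) ((continuous_pow _).continuousOn.mul
      ((continuous_phi hp).comp_continuousOn (hu.continuousOn_du.mono
        fun s hs => ⟨hs.1, (hpos s hs).le⟩))) fun s hs => ?_
    rw [interior_Icc] at hs
    rw [(hu.hasDerivAt_pow_mul_phi hn ⟨hs.1, hpos s (Ioo_subset_Icc_self hs)⟩).deriv]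
    exact neg_neg_of_pos (mul_pos (pow_pos hs.1 _)
      (hsub ⟨hs.1.le, hs.2.trans hr.2⟩).1)
  simpa [hu.bc0] using hanti (left_mem_Icc.2 hr.1.le) (right_mem_Icc.2 hr.1.le) hr.1

lemma du_neg (hp : 1 < p) (hn : 1 ≤ n)
    (hf : ContDiffOn ℝ 1 (fun z : ℝ × ℝ => f z.1 z.2) (Icc 0 1 ×ˢ Ici 0))
    (hFr : ∀ r ∈ Icc (0:ℝ) 1, ∀ v > (0:ℝ), deriv (fun s => primitive f s v) r ≤ 0)
    (hsign : ∀ r₀ ∈ Ico (0:ℝ) 1, PosOrChangesSignOnce (f r₀))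
    (hu : RadialSol p n f u) {r : ℝ} (hr : r ∈ Ioo (0:ℝ) 1) : du u r < 0 := by
  have hf0 := hu.pos_of_du_eq_zero hp hn hf hFr hsign ⟨le_rfl, zero_lt_one⟩ hu.bc0
  have hzero : ∀ x ∈ Ioo (0:ℝ) 1, x ^ (n - 1) * phi p (du u x) = 0 →
      -(x ^ (n - 1) * f x (u x)) < 0 := fun x hx hx0 => by
    have hdu : du u x = 0 :=
      phi_eq_zero_iff.1 ((mul_eq_zero.1 hx0).resolve_left (pow_pos hx.1 _).ne')
    exact neg_neg_of_pos (mul_pos (pow_pos hx.1 _)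
      (hu.pos_of_du_eq_zero hp hn hf hFr hsign (Ioo_subset_Ico_self hx) hdu))
  have hw := neg_of_hasDerivAt_neg_of_eq_zero (fun x hx => hu.hasDerivAt_pow_mul_phi hn hx)
    hzero (hu.eventually_pow_mul_phi_neg hp hn hf.continuousOn hf0) hr
  by_contra! h
  exact (mul_nonneg (pow_pos hr.1 _).le (phi_nonneg h)).not_gt hw

end RadialSol

/-- Lemma 2.2: monotonicity of positive solutions and positivity of `f(0,u(0))`. -/
theorem stmt0 (p : ℝ) (hp : 1 < p) (n : ℕ) (hn : 1 ≤ n)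
    (f : ℝ → ℝ → ℝ)
    (hf : ContDiffOn ℝ 1 (fun z : ℝ × ℝ => f z.1 z.2) (Set.Icc 0 1 ×ˢ Set.Ici 0))
    (hFr : ∀ r ∈ Set.Icc (0:ℝ) 1, ∀ v > (0:ℝ),
      deriv (fun s => ∫ t in (0:ℝ)..v, f s t) r ≤ 0)
    (hsign : ∀ r₀ ∈ Set.Ico (0:ℝ) 1,
      (∀ v > (0:ℝ), 0 < f r₀ v) ∨
      ∃ γ > (0:ℝ), (∀ v ∈ Set.Ioo (0:ℝ) γ, f r₀ v < 0) ∧ (∀ v > γ, 0 < f r₀ v))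
    (u : ℝ → ℝ) (hu : RadialSol p n f u) :
    (∀ r ∈ Set.Ioo (0:ℝ) 1, du u r < 0) ∧ 0 < f 0 (u 0) :=
  ⟨fun _ hr => hu.du_neg hp hn hf hFr hsign hr,
    hu.pos_of_du_eq_zero hp hn hf hFr hsign ⟨le_rfl, zero_lt_one⟩ hu.bc0⟩
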